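/- Let α ∈ {−1,1}. For all x, y ∈ ℝ with x² + y² = 1, setting z = x + iy, the following identities hold in Cl(Q_α) for every w ∈ ℂ: (x·1 + y·ι(1)ι(i)) · ι(w) · (x·1 − y·ι(1)ι(i)) = ι(z^{−2α}·w), and ι(1) · ι(w) · ι(1) = α·ι(conj(w)), where z^{−2α} means conj(z)² when α = +1 and z² when α = −1. Consequently, with φ_α the injective homomorphism O₂(α) → (Cl(Q_α))ˣ with φ_α(z,0̂) = x + y·ι(1)ι(i) and φ_α(z,1̂) = (x + y·ι(1)ι(i))·ι(1), one has φ_α(z,t) · ι(w) · φ_α(z,t)⁻¹ = ι(z^{−2α}·w) if t = 0̂ and = ι(z^{−2α}·conj(w)) if t = 1̂; that is, the untwisted vector representation of Pin₂(α) agrees with Φ₀^{(−α)} ∘ σ_α. -/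

import Mathlib

/-!
With `E = ι(1)ι(i)`: since `ι(1)` and `ι(i)` anticommute and square to `α`, left and right
multiplication by `E` act on a vector `ι(w)` as multiplication of `w` by `-αi` and `αi`. Hence both
`x + yE` and `x - yE` act on vectors as multiplication by `x - αyi`, which is `conj z` for `α = 1`
and `z` for `α = -1`, and the conjugate of `ι(w)` is `ι((x - αyi)² w)`. The second identity is the
reflection formula `ι(a)ι(b)ι(a) = ι(polar(a,b)·a - Q(a)·b)`. For `φ`, multiplicativity gives
`φ(z,0̂)⁻¹ = φ(z⁻¹,0̂) = x - yE`, and `φ(z,1̂) = φ(z,0̂)·φ(1,1̂)` with `φ(1,1̂) = ι(1)`, whose inverse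
is `α·ι(1)`.
-/

set_option linter.unnecessarySeqFocus false

open Complex

/-- Complex conjugation as a group endomorphism of the circle group. -/
noncomputable def conjC : Circle →* Circle where
  toFun z := ⟨(starRingEnd ℂ) (z : ℂ), by
    simp only [Submonoid.unitSphere, Metric.mem_sphere, dist_zero_right]
    simp [Circle.norm_coe]⟩
  map_one' := by ext; simp
  map_mul' a b := by ext; simp <;> rfl

@[simp] lemma conjC_coe (z : Circle) : (conjC z : ℂ) = (starRingEnd ℂ) (z : ℂ) := rfl

@[simp] lemma conjC_conjC (z : Circle) : conjC (conjC z) = z := by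
  ext; simp

/-- The element `-1` of the circle group. -/
noncomputable def negOneC : Circle := ⟨-1, by
  simp only [Submonoid.unitSphere, Metric.mem_sphere, dist_zero_right]
  simp⟩

@[simp] lemma negOneC_coe : (negOneC : ℂ) = -1 := rfl

/-- The sign `α = ±1` as an element of the circle group. -/
noncomputable def sgnC (α : ℤˣ) : Circle := if α = 1 then 1 else negOneC

/-- The underlying type of a twisted extension of `ℤ₂ = {0̂, 1̂}` by a commutative group `A`,
with twisting endomorphism `τ` and cocycle value `a₀`.  An element `⟨z, t⟩` stands for the
pair `(z, t)`.  The group `O₂(α)` of the paper is the case `A = Circle`, `τ` = complex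
conjugation, `a₀ = α = ±1`. -/
@[ext]
structure Tw (A : Type*) [CommGroup A] (τ : A →* A) (a₀ : A) where
  z : A
  t : ZMod 2

namespace Tw

variable {A : Type*} [CommGroup A] {τ : A →* A} {a₀ : A}

/-- The multiplication `(z₁,0̂)(z₂,t) = (z₁z₂, t)`, `(z₁,1̂)(z₂,0̂) = (z₁·τ(z₂), 1̂)`,
`(z₁,1̂)(z₂,1̂) = (a₀·z₁·τ(z₂), 0̂)`. -/
instance : Mul (Tw A τ a₀) :=
  ⟨fun g h => ⟨(if g.t = 1 ∧ h.t = 1 then a₀ else 1) * g.z * (if g.t = 1 then τ h.z else h.z),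
    g.t + h.t⟩⟩

/-- The unit `(1, 0̂)`. -/
instance : One (Tw A τ a₀) := ⟨⟨1, 0⟩⟩

instance : Inv (Tw A τ a₀) := ⟨fun g => ⟨if g.t = 1 then a₀⁻¹ * τ g.z⁻¹ else g.z⁻¹, g.t⟩⟩

@[simp] lemma mul_z (g h : Tw A τ a₀) :
    (g * h).z = (if g.t = 1 ∧ h.t = 1 then a₀ else 1) * g.z * (if g.t = 1 then τ h.z else h.z) :=
  rfl

@[simp] lemma mul_t (g h : Tw A τ a₀) : (g * h).t = g.t + h.t := rfl

@[simp] lemma one_z : (1 : Tw A τ a₀).z = 1 := rfl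
@[simp] lemma one_t : (1 : Tw A τ a₀).t = 0 := rfl

@[simp] lemma inv_z (g : Tw A τ a₀) :
    (g⁻¹).z = if g.t = 1 then a₀⁻¹ * τ g.z⁻¹ else g.z⁻¹ := rfl
@[simp] lemma inv_t (g : Tw A τ a₀) : (g⁻¹).t = g.t := rfl

lemma zmod2_cases : ∀ t : ZMod 2, t = 0 ∨ t = 1 := by decide

instance group [Fact (∀ a : A, τ (τ a) = a)] [Fact (τ a₀ = a₀)] : Group (Tw A τ a₀) := by
  have hττ := Fact.out (p := ∀ a : A, τ (τ a) = a)
  have hτa := Fact.out (p := τ a₀ = a₀)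
  refine Group.ofLeftAxioms ?_ ?_ ?_
  · rintro ⟨z₁, t₁⟩ ⟨z₂, t₂⟩ ⟨z₃, t₃⟩
    rcases zmod2_cases t₁ with rfl | rfl <;> rcases zmod2_cases t₂ with rfl | rfl <;>
      rcases zmod2_cases t₃ with rfl | rfl <;> ext <;>
      simp [hττ, hτa, map_mul, mul_comm, mul_assoc, mul_left_comm] <;> decide
  · rintro ⟨z, t⟩
    ext <;> simp
  · rintro ⟨z, t⟩
    rcases zmod2_cases t with rfl | rfl <;> ext <;>
      simp [hττ, hτa, map_mul, mul_comm, mul_assoc, mul_left_comm] <;> decide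

end Tw

instance : Fact (∀ a : Circle, conjC (conjC a) = a) := ⟨conjC_conjC⟩

instance (α : ℤˣ) : Fact (conjC (sgnC α) = sgnC α) := ⟨by
  rcases Int.units_eq_one_or α with rfl | rfl <;> ext <;> simp [sgnC, negOneC] <;>
    exact (conjC_coe _).trans (show (starRingEnd ℂ) (-1) = -1 by simp)⟩

/-- The group `O₂(α)` for a sign `α ∈ {−1, 1}`: underlying set `Circle × ℤ₂` with the
twisted multiplication `(z₁,0̂)(z₂,t) = (z₁z₂,t)`, `(z₁,1̂)(z₂,0̂) = (z₁·conj(z₂),1̂)`,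
`(z₁,1̂)(z₂,1̂) = (α·z₁·conj(z₂),0̂)` and unit `(1,0̂)`. -/
abbrev O2 (α : ℤˣ) : Type := Tw Circle conjC (sgnC α)

open CliffordAlgebra ComplexConjugate

theorem Int.cast_units_mul_self {R : Type*} [Ring R] (u : ℤˣ) : ((u : ℤ) : R) * u = 1 := by
  rw [← Int.cast_mul, Int.units_coe_mul_self, Int.cast_one]

section QuadraticFormScaledNormSq

variable {A : ℝ} {Q : QuadraticForm ℝ ℂ}

theorem polar_eq_of_eq_smul_normSq (hQ : ∀ w : ℂ, Q w = A * Complex.normSq w) (v w : ℂ) :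
    QuadraticMap.polar Q v w = 2 * A * (v * conj w).re := by
  simp only [QuadraticMap.polar, hQ, Complex.normSq_add]
  ring

theorem ι_eq_re_smul_add_im_smul (w : ℂ) : ι Q w = w.re • ι Q 1 + w.im • ι Q I := by
  rw [← map_smul, ← map_smul, ← map_add]
  congr 1
  apply Complex.ext <;> simp

theorem ι_one_mul_ι_mul_ι_one (hQ : ∀ w : ℂ, Q w = A * Complex.normSq w) (w : ℂ) :
    ι Q 1 * ι Q w * ι Q 1 = A • ι Q (conj w) := by
  rw [ι_mul_ι_mul_ι, polar_eq_of_eq_smul_normSq hQ, hQ, ← map_smul]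
  congr 1
  apply Complex.ext <;> simp <;> ring

theorem ι_one_mul_ι_I_mul_ι (hQ : ∀ w : ℂ, Q w = A * Complex.normSq w) (w : ℂ) :
    ι Q 1 * ι Q I * ι Q w = ι Q (-(A * I * w)) := by
  have hE_one : ι Q 1 * ι Q I * ι Q 1 = ι Q (-(A * I)) := by
    rw [ι_mul_ι_mul_ι, polar_eq_of_eq_smul_normSq hQ, hQ]
    congr 1
    apply Complex.ext <;> simp
  have hE_I : ι Q 1 * ι Q I * ι Q I = A • ι Q 1 := by
    rw [mul_assoc, ι_sq_scalar, hQ, ← Algebra.commutes, Algebra.algebraMap_eq_smul_one,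
      smul_mul_assoc, one_mul]
    simp
  rw [ι_eq_re_smul_add_im_smul w, mul_add, mul_smul_comm, mul_smul_comm, hE_one, hE_I,
    ← map_smul, ← map_smul, ← map_smul, ← map_add]
  congr 1
  apply Complex.ext <;> simp <;> ring

theorem ι_mul_ι_one_mul_ι_I (hQ : ∀ w : ℂ, Q w = A * Complex.normSq w) (w : ℂ) :
    ι Q w * (ι Q 1 * ι Q I) = ι Q (A * I * w) := by
  have h_one_E : ι Q 1 * (ι Q 1 * ι Q I) = A • ι Q I := by
    rw [← mul_assoc, ι_sq_scalar, hQ, Algebra.algebraMap_eq_smul_one, smul_mul_assoc, one_mul]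
    simp
  have h_I_E : ι Q I * (ι Q 1 * ι Q I) = ι Q (-A) := by
    rw [← mul_assoc, ι_mul_ι_mul_ι, polar_eq_of_eq_smul_normSq hQ, hQ]
    congr 1
    apply Complex.ext <;> simp
  rw [ι_eq_re_smul_add_im_smul w, add_mul, smul_mul_assoc, smul_mul_assoc, h_one_E, h_I_E,
    ← map_smul, ← map_smul, ← map_smul, ← map_add]
  congr 1
  apply Complex.ext <;> simp <;> ring

theorem rotor_mul_ι (hQ : ∀ w : ℂ, Q w = A * Complex.normSq w) (x y : ℝ) (w : ℂ) :
    (algebraMap ℝ (CliffordAlgebra Q) x + y • (ι Q 1 * ι Q I)) * ι Q w =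
      ι Q ((x - A * y * I) * w) := by
  rw [add_mul, smul_mul_assoc, ι_one_mul_ι_I_mul_ι hQ, ← Algebra.smul_def, ← map_smul,
    ← map_smul, ← map_add]
  congr 1
  simp only [Complex.real_smul]
  ring

theorem ι_mul_rotor_reverse (hQ : ∀ w : ℂ, Q w = A * Complex.normSq w) (x y : ℝ) (w : ℂ) :
    ι Q w * (algebraMap ℝ (CliffordAlgebra Q) x - y • (ι Q 1 * ι Q I)) =
      ι Q ((x - A * y * I) * w) := by
  rw [mul_sub, mul_smul_comm, ι_mul_ι_one_mul_ι_I hQ, ← Algebra.commutes, ← Algebra.smul_def,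
    ← map_smul, ← map_smul, ← map_sub]
  congr 1
  simp only [Complex.real_smul]
  ring

theorem rotor_mul_ι_mul_rotor_reverse (hQ : ∀ w : ℂ, Q w = A * Complex.normSq w) (x y : ℝ)
    (w : ℂ) :
    (algebraMap ℝ (CliffordAlgebra Q) x + y • (ι Q 1 * ι Q I)) * ι Q w *
        (algebraMap ℝ (CliffordAlgebra Q) x - y • (ι Q 1 * ι Q I)) =
      ι Q ((x - A * y * I) ^ 2 * w) := by
  rw [mul_assoc, ι_mul_rotor_reverse hQ, rotor_mul_ι hQ, ← mul_assoc, ← sq]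

theorem val_mul_ι_mul_val_inv_eq_ι_conj {α : ℤˣ}
    (hQ : ∀ w : ℂ, Q w = (α : ℝ) * Complex.normSq w) {u : (CliffordAlgebra Q)ˣ}
    (hu : (u : CliffordAlgebra Q) = ι Q 1) (w : ℂ) :
    (u : CliffordAlgebra Q) * ι Q w * ↑u⁻¹ = ι Q (conj w) := by
  have hu_inv : (↑u⁻¹ : CliffordAlgebra Q) = (α : ℝ) • ι Q 1 := by
    refine Units.inv_eq_of_mul_eq_one_right ?_
    rw [hu, mul_smul_comm, ι_sq_scalar, hQ, Complex.normSq_one, mul_one, Algebra.smul_def,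
      ← map_mul, Int.cast_units_mul_self, map_one]
  rw [hu, hu_inv, mul_smul_comm, ι_one_mul_ι_mul_ι_one hQ, smul_smul, Int.cast_units_mul_self,
    one_smul]

end QuadraticFormScaledNormSq

theorem ite_conj_sq_eq_sq (α : ℤˣ) (c : ℂ) :
    (if α = 1 then conj c ^ 2 else c ^ 2) = (c.re - (α : ℝ) * c.im * I) ^ 2 := by
  rcases Int.units_eq_one_or α with rfl | rfl
  · rw [if_pos rfl]
    congr 1
    apply Complex.ext <;> simp
  · simp [Complex.re_add_im]

namespace Tw

variable {A : Type*} [CommGroup A] {τ : A →* A} {a₀ : A}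

theorem inv_mk_zero (z : A) : (⟨z, 0⟩ : Tw A τ a₀)⁻¹ = ⟨z⁻¹, 0⟩ := by
  ext <;> simp

theorem mk_zero_mul_mk_one_one (z : A) : (⟨z, 0⟩ : Tw A τ a₀) * ⟨1, 1⟩ = ⟨z, 1⟩ := by
  ext <;> simp

end Tw

open CliffordAlgebra in
/-- Conjugation identities in `Cl(Q_α)`, `Q_α(w) = α·|w|²`: for `z = x + iy` of unit norm,
`(x + y·ι(1)ι(i))·ι(w)·(x − y·ι(1)ι(i)) = ι(z^{−2α}·w)` and `ι(1)ι(w)ι(1) = α·ι(conj w)`;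
consequently the untwisted vector representation of `Pin₂(α) ≅ O₂(α)` is
`Φ₀^{(−α)} ∘ σ_α`, i.e. `φ_α(z,t)·ι(w)·φ_α(z,t)⁻¹` equals `ι(z^{−2α}·w)` for `t = 0̂` and
`ι(z^{−2α}·conj(w))` for `t = 1̂`. -/
theorem pin2_untwisted_vector_rep (α : ℤˣ) (Q : QuadraticForm ℝ ℂ)
    (hQ : ∀ w : ℂ, Q w = (α : ℝ) * Complex.normSq w) :
    (∀ x y : ℝ, x ^ 2 + y ^ 2 = 1 → ∀ w : ℂ,
      (algebraMap ℝ (CliffordAlgebra Q) x + y • (ι Q 1 * ι Q Complex.I)) * ι Q w *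
          (algebraMap ℝ (CliffordAlgebra Q) x - y • (ι Q 1 * ι Q Complex.I)) =
        ι Q ((if α = 1 then (starRingEnd ℂ) ((x : ℂ) + (y : ℂ) * Complex.I) ^ 2
              else ((x : ℂ) + (y : ℂ) * Complex.I) ^ 2) * w)) ∧
    (∀ w : ℂ, ι Q 1 * ι Q w * ι Q 1 = (α : ℝ) • ι Q ((starRingEnd ℂ) w)) ∧
    (∀ φ : O2 α →* (CliffordAlgebra Q)ˣ,
      (∀ z : Circle, ((φ ⟨z, 0⟩ : (CliffordAlgebra Q)ˣ) : CliffordAlgebra Q) =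
        algebraMap ℝ (CliffordAlgebra Q) (z : ℂ).re +
          (z : ℂ).im • (ι Q 1 * ι Q Complex.I)) →
      (∀ z : Circle, ((φ ⟨z, 1⟩ : (CliffordAlgebra Q)ˣ) : CliffordAlgebra Q) =
        (algebraMap ℝ (CliffordAlgebra Q) (z : ℂ).re +
          (z : ℂ).im • (ι Q 1 * ι Q Complex.I)) * ι Q 1) →
      ∀ (z : Circle) (w : ℂ),
        (((φ ⟨z, 0⟩ : (CliffordAlgebra Q)ˣ) : CliffordAlgebra Q) * ι Q w *
            (((φ ⟨z, 0⟩)⁻¹ : (CliffordAlgebra Q)ˣ) : CliffordAlgebra Q) =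
          ι Q ((if α = 1 then (starRingEnd ℂ) (z : ℂ) ^ 2 else (z : ℂ) ^ 2) * w)) ∧
        (((φ ⟨z, 1⟩ : (CliffordAlgebra Q)ˣ) : CliffordAlgebra Q) * ι Q w *
            (((φ ⟨z, 1⟩)⁻¹ : (CliffordAlgebra Q)ˣ) : CliffordAlgebra Q) =
          ι Q ((if α = 1 then (starRingEnd ℂ) (z : ℂ) ^ 2 else (z : ℂ) ^ 2) *
            (starRingEnd ℂ) w))) := by
  refine ⟨fun x y _ w => ?_, ι_one_mul_ι_mul_ι_one hQ, fun φ h0 h1 z => ?_⟩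
  · rw [rotor_mul_ι_mul_rotor_reverse hQ, ite_conj_sq_eq_sq]
    simp
  have rotation (w : ℂ) : ((φ ⟨z, 0⟩ : (CliffordAlgebra Q)ˣ) : CliffordAlgebra Q) * ι Q w *
      (((φ ⟨z, 0⟩)⁻¹ : (CliffordAlgebra Q)ˣ) : CliffordAlgebra Q) =
        ι Q ((if α = 1 then (starRingEnd ℂ) (z : ℂ) ^ 2 else (z : ℂ) ^ 2) * w) := by
    rw [← map_inv, Tw.inv_mk_zero, h0, h0, Circle.coe_inv_eq_conj, Complex.conj_re,
      Complex.conj_im, neg_smul, ← sub_eq_add_neg, rotor_mul_ι_mul_rotor_reverse hQ,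
      ite_conj_sq_eq_sq]
  have reflection : ∀ w : ℂ, ((φ ⟨1, 1⟩ : (CliffordAlgebra Q)ˣ) : CliffordAlgebra Q) * ι Q w *
      (((φ ⟨1, 1⟩)⁻¹ : (CliffordAlgebra Q)ˣ) : CliffordAlgebra Q) = ι Q (conj w) :=
    val_mul_ι_mul_val_inv_eq_ι_conj hQ (by simp [h1])
  refine fun w => ⟨rotation w, ?_⟩
  rw [← Tw.mk_zero_mul_mk_one_one, map_mul, mul_inv_rev, Units.val_mul, Units.val_mul,
    ← rotation, ← reflection]
  simp only [mul_assoc]
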